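/- Let W be a quartic form in ℂ[X₀,…,X₅] whose six first partial derivatives are linearly independent, and let ∂ : JW ⊗ ℂ⁶ → Q be the ℂ-linear map sending F ⊗ a to Σᵢ aᵢ·∂F/∂Xᵢ, where Q is the 21-dimensional space of quadratic forms. If ∂ is surjective, then the kernel of ∂ has dimension 15 and equals the ℂ-linear span of the 15 tensors (∂W/∂Xⱼ) ⊗ eᵢ − (∂W/∂Xᵢ) ⊗ eⱼ, for 0 ≤ i < j ≤ 5. -/

import Mathlib

set_option synthInstance.maxHeartbeats 1000000
set_option maxHeartbeats 1000000

open MvPolynomial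
open scoped TensorProduct

noncomputable section

/-- The polynomial ring `ℂ[X₀,…,X₅]`. -/
abbrev R6 : Type := MvPolynomial (Fin 6) ℂ

/-- The jacobian space of a polynomial: the `ℂ`-span of its six first partial
derivatives. -/
def jacSpace (F : R6) : Submodule ℂ R6 :=
  Submodule.span ℂ (Set.range fun i : Fin 6 => pderiv i F)

/-- The map `∂ : JW ⊗ ℂ⁶ → ℂ[X₀,…,X₅]` sending `F ⊗ a` to `Σᵢ aᵢ·∂F/∂Xᵢ`. -/
def jTensor (W : R6) : TensorProduct ℂ (jacSpace W) (Fin 6 → ℂ) →ₗ[ℂ] R6 :=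
  TensorProduct.lift
    { toFun := fun F =>
        { toFun := fun a => ∑ i : Fin 6, a i • pderiv i (F : R6)
          map_add' := fun a b => by
            simp [add_smul, Finset.sum_add_distrib]
          map_smul' := fun c a => by
            simp [Finset.smul_sum, mul_smul] }
      map_add' := fun F F' => by
        ext a
        simp [smul_add, Finset.sum_add_distrib]
      map_smul' := fun c F => LinearMap.ext fun a => by
        show ∑ i : Fin 6, a i • pderiv i ((c • F : jacSpace W) : R6) =
          c • ∑ i : Fin 6, a i • pderiv i (F : R6)
        rw [Finset.smul_sum]
        refine Finset.sum_congr rfl fun i _ => ?_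
        rw [Submodule.coe_smul, Derivation.map_smul, smul_comm] }

instance instACG (W : R6) (S : Submodule ℂ (TensorProduct ℂ (jacSpace W) (Fin 6 → ℂ))) :
    AddCommGroup S :=
  @Submodule.addCommGroup ℂ (TensorProduct ℂ (jacSpace W) (Fin 6 → ℂ)) _ _ _ S

instance instMod (W : R6) (S : Submodule ℂ (TensorProduct ℂ (jacSpace W) (Fin 6 → ℂ))) :
    Module ℂ S :=
  @Submodule.module ℂ (TensorProduct ℂ (jacSpace W) (Fin 6 → ℂ)) _ _ _ S

/-- The `i`-th partial derivative of `W`, as an element of `J W`. -/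
def dW (W : R6) (i : Fin 6) : jacSpace W :=
  ⟨pderiv i W, Submodule.subset_span (Set.mem_range_self i)⟩

/-! By rank–nullity, `∂` maps the 36-dimensional space `JW ⊗ ℂ⁶` onto the 21-dimensional `Q`,
so its kernel has dimension 15. The tensors `∂ⱼW ⊗ eᵢ - ∂ᵢW ⊗ eⱼ` lie in the kernel because
`∂ᵢ∂ⱼW = ∂ⱼ∂ᵢW`, and they are linearly independent because the `∂ᵢW` form a basis of `JW`;
being 15 of them, they span the kernel. -/

namespace MvPolynomial

theorem pderiv_pderiv_comm {R σ : Type*} [CommSemiring R] (i j : σ) (f : MvPolynomial σ R) :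
    pderiv i (pderiv j f) = pderiv j (pderiv i f) := by
  classical
  by_cases h : i = j
  · rw [h]
  induction f using MvPolynomial.induction_on' with
  | add p q hp hq => simp only [map_add, hp, hq]
  | monomial s a =>
    simp only [pderiv_monomial, Finsupp.tsub_apply, Finsupp.single_eq_of_ne h,
      Finsupp.single_eq_of_ne (Ne.symm h), tsub_zero, tsub_right_comm, mul_right_comm]

theorem finrank_homogeneousSubmodule {K σ : Type*} [Field K] [Fintype σ] (n : ℕ) :
    Module.finrank K (homogeneousSubmodule σ K n) = (Fintype.card σ).multichoose n := by
  classical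
  have e : {d : σ →₀ ℕ | d.degree = n} ≃ Sym σ n := (Sym.equivNatSum σ n).symm
  rw [homogeneousSubmodule_eq_finsupp_supported,
    (AddMonoidAlgebra.supportedEquivFinsupp {d : σ →₀ ℕ | d.degree = n}).finrank_eq,
    Module.finrank_eq_nat_card_basis Finsupp.basisSingleOne, Nat.card_congr e,
    Nat.card_eq_fintype_card, Sym.card_sym_eq_multichoose]

end MvPolynomial

theorem Module.Basis.linearIndependent_antisymm_tmul {R M N ι : Type*} [CommRing R]
    [AddCommGroup M] [Module R M] [AddCommGroup N] [Module R N] [LinearOrder ι]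
    (b : Basis ι R M) (c : Basis ι R N) :
    LinearIndependent R fun p : {p : ι × ι // p.1 < p.2} =>
      b p.1.2 ⊗ₜ[R] c p.1.1 - b p.1.1 ⊗ₜ[R] c p.1.2 := by
  classical
  -- In `b ⊗ c`-coordinates restricted to the pairs `i < j`, the `p`-th vector is `-single p 1`.
  let f := Finsupp.lcomapDomain (R := R) (M := R) (fun p : {p : ι × ι // p.1 < p.2} => p.1)
    Subtype.val_injective ∘ₗ (b.tensorProduct c).repr.toLinearMap
  refine LinearIndependent.of_comp f ?_
  have hf : ∀ p, f (b p.1.2 ⊗ₜ[R] c p.1.1 - b p.1.1 ⊗ₜ[R] c p.1.2) = -Finsupp.single p 1 := by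
    rintro ⟨⟨k, l⟩, hkl⟩
    ext ⟨⟨i, j⟩, hij⟩
    have : ¬(l = i ∧ k = j) := fun ⟨rfl, rfl⟩ => lt_asymm hkl hij
    simp only [f, LinearMap.coe_comp, Function.comp_apply, map_sub, LinearEquiv.coe_coe,
      Finsupp.lcomapDomain_apply, Finsupp.comapDomain_apply, Finsupp.coe_sub, Pi.sub_apply,
      Basis.tensorProduct_repr_tmul_apply, Basis.repr_self, Finsupp.single_apply,
      Finsupp.coe_neg, Pi.neg_apply, Subtype.mk.injEq, Prod.mk.injEq]
    split_ifs <;> simp_all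
  simp only [Function.comp_def, hf]
  exact (Finsupp.basisSingleOne (R := R)).linearIndependent.neg

theorem jTensor_tmul_single (W : R6) (F : jacSpace W) (i : Fin 6) :
    jTensor W (F ⊗ₜ[ℂ] (Pi.single i 1 : Fin 6 → ℂ)) = pderiv i (F : R6) := by
  simp [jTensor, Pi.single_apply, ite_smul]

theorem jTensor_dW_antisymm (W : R6) (i j : Fin 6) :
    jTensor W (dW W j ⊗ₜ[ℂ] (Pi.single i 1 : Fin 6 → ℂ) -
      dW W i ⊗ₜ[ℂ] (Pi.single j 1 : Fin 6 → ℂ)) = 0 := by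
  rw [map_sub, jTensor_tmul_single, jTensor_tmul_single, sub_eq_zero]
  exact pderiv_pderiv_comm i j W

section JacobianBasis

variable {W : R6} (hind : LinearIndependent ℂ fun i : Fin 6 => pderiv i W)
include hind

def jacBasis : Module.Basis (Fin 6) ℂ (jacSpace W) := .span hind

theorem jacBasis_apply (i : Fin 6) : jacBasis hind i = dW W i :=
  Module.Basis.span_apply hind i

theorem finrank_ker_jTensor
    (hsurj : LinearMap.range (jTensor W) = homogeneousSubmodule (Fin 6) ℂ 2) :
    Module.finrank ℂ (LinearMap.ker (jTensor W)) = 15 := by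
  have := Module.Finite.of_basis (jacBasis hind)
  have hrank := LinearMap.finrank_range_add_finrank_ker (K := ℂ)
    (V := TensorProduct ℂ (jacSpace W) (Fin 6 → ℂ)) (jTensor W)
  rw [hsurj, finrank_homogeneousSubmodule, Module.finrank_tensorProduct,
    Module.finrank_eq_card_basis (jacBasis hind), Module.finrank_fin_fun] at hrank
  rw [Fintype.card_fin, Nat.multichoose_eq, show Nat.choose (6 + 2 - 1) 2 = 21 by decide] at hrank
  omega

end JacobianBasis

theorem stmt13_general (W : R6)
    (hind : LinearIndependent ℂ (fun i : Fin 6 => pderiv i W))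
    (hsurj : LinearMap.range (jTensor W) = homogeneousSubmodule (Fin 6) ℂ 2) :
    Module.finrank ℂ (LinearMap.ker (jTensor W)) = 15 ∧
    LinearMap.ker (jTensor W) =
      Submodule.span ℂ (Set.range fun p : {p : Fin 6 × Fin 6 // p.1 < p.2} =>
        dW W p.1.2 ⊗ₜ[ℂ] (Pi.single p.1.1 1 : Fin 6 → ℂ) -
        dW W p.1.1 ⊗ₜ[ℂ] (Pi.single p.1.2 1 : Fin 6 → ℂ)) := by
  have hker := finrank_ker_jTensor hind hsurj
  set v := fun p : {p : Fin 6 × Fin 6 // p.1 < p.2} =>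
      dW W p.1.2 ⊗ₜ[ℂ] (Pi.single p.1.1 1 : Fin 6 → ℂ) -
      dW W p.1.1 ⊗ₜ[ℂ] (Pi.single p.1.2 1 : Fin 6 → ℂ)
  have hli : LinearIndependent ℂ v := by
    simpa only [jacBasis_apply, Pi.basisFun_apply] using
      (jacBasis hind).linearIndependent_antisymm_tmul (Pi.basisFun ℂ (Fin 6))
  have hle : Submodule.span ℂ (Set.range v) ≤ LinearMap.ker (jTensor W) :=
    Submodule.span_le.2 <| Set.range_subset_iff.2 fun p =>
      LinearMap.mem_ker.2 (jTensor_dW_antisymm W p.1.1 p.1.2)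
  have := Module.finite_of_finrank_eq_succ hker
  refine ⟨hker, (Submodule.eq_of_le_of_finrank_eq
    (V := TensorProduct ℂ (jacSpace W) (Fin 6 → ℂ)) hle ?_).symm⟩
  rw [finrank_span_eq_card hli, hker]
  decide

/-- If the first partials of `W` are independent and `∂ : JW ⊗ ℂ⁶ → Q` is
surjective onto the space `Q` of quadratic forms, then `ker ∂` has dimension 15
and is spanned by the tensors `(∂W/∂Xⱼ) ⊗ eᵢ − (∂W/∂Xᵢ) ⊗ eⱼ`, `i < j`. -/
theorem stmt13 (W : R6) (hW : W.IsHomogeneous 4)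
    (hind : LinearIndependent ℂ (fun i : Fin 6 => pderiv i W))
    (hsurj : LinearMap.range (jTensor W) = homogeneousSubmodule (Fin 6) ℂ 2) :
    Module.finrank ℂ (LinearMap.ker (jTensor W)) = 15 ∧
    LinearMap.ker (jTensor W) =
      Submodule.span ℂ (Set.range fun p : {p : Fin 6 × Fin 6 // p.1 < p.2} =>
        dW W p.1.2 ⊗ₜ[ℂ] (Pi.single p.1.1 1 : Fin 6 → ℂ) -
        dW W p.1.1 ⊗ₜ[ℂ] (Pi.single p.1.2 1 : Fin 6 → ℂ)) :=
  stmt13_general W hind hsurj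

end
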